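/- arXiv:2603.08103 — 3 statements merged into one kernel-verified Lean document; each statement's English description precedes it below -/
import Mathlib

section
/- Let H be a cancellative commutative monoid with zero (1 ≠ 0) with quotient groupoid G, and assume H is an s-Prüfer monoid. Then the domination map δ : Zar(G|H) → s-spec(H), δ(S) = m_S ∩ H, is a homeomorphism, where both spaces carry their Zariski topologies. -/
/-!
Since `G` is a group with zero, an element `x` of a submonoid `S ⊇ H` lies outside `m_S` exactly
when `x ≠ 0` and `x⁻¹ ∈ S`. The s-Prüfer property, applied to the ideal generated by `a` and `b`
where `x = a * b⁻¹`, rewrites every nonzero `x` as a fraction whose numerator or denominator is a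
unit of `H`. This has two consequences: every submonoid `S ⊇ H` is the localization `H_P` of `H`
at `P = δ(S)`, and every localization `H_P` at a prime `s`-ideal is a valuation submonoid with
`δ(H_P) = P`. So `P ↦ H_P` inverts `δ`, and both maps are continuous because
`δ⁻¹(D_s(f)) = B(f⁻¹)` for `f ≠ 0` and `{P | x ∈ H_P} = ⋃ {D_s(d) | d ∈ H, x * d ∈ H}`.
-/

open Set Topology

variable (G : Type*) [CommGroupWithZero G]

/-- A valuation submonoid of a commutative group with zero `G`: a submonoid `V` with
`0 ∈ V` such that for every nonzero `x ∈ G`, either `x ∈ V` or `x⁻¹ ∈ V`. -/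
def IsValSubmonoid (V : Submonoid G) : Prop :=
  (0 : G) ∈ V ∧ ∀ x : G, x ≠ 0 → (x ∈ V ∨ x⁻¹ ∈ V)

/-- `G` is the quotient groupoid of `H`: every element of `G` has the form `a * b⁻¹`
with `a, b ∈ H`, `b ≠ 0`. -/
def IsQuotientGroupoid (H : Submonoid G) : Prop :=
  ∀ g : G, ∃ a ∈ H, ∃ b ∈ H, b ≠ 0 ∧ g = a * b⁻¹

/-- The Riemann–Zariski space `Zar(G|H)`: all valuation submonoids of `G` containing `H`. -/
def Zar (H : Submonoid G) : Type _ :=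
  {V : Submonoid G // IsValSubmonoid G V ∧ H ≤ V}

/-- The Zariski topology on `Zar(G|H)`, generated by the sets `B(x) = {S | x ∈ S}`. -/
instance (H : Submonoid G) : TopologicalSpace (Zar G H) :=
  TopologicalSpace.generateFrom {B : Set (Zar G H) | ∃ x : G, B = {S | x ∈ S.1}}

/-- The set of non-invertible elements of a submonoid `S` of `G`. -/
def mIdeal (S : Submonoid G) : Set G := {x : G | x ∈ S ∧ ¬∃ y ∈ S, x * y = 1}

/-- A prime `s`-ideal of `H`: a proper subset `P ⊊ H` with `0 ∈ P`, `P·H ⊆ P`, and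
`a * b ∈ P` implies `a ∈ P` or `b ∈ P` for all `a, b ∈ H`. -/
def IsPrimeSIdeal (H : Submonoid G) (P : Set G) : Prop :=
  P ⊆ (H : Set G) ∧ P ≠ (H : Set G) ∧ (0 : G) ∈ P ∧
    (∀ p ∈ P, ∀ h ∈ H, p * h ∈ P) ∧
    (∀ a ∈ H, ∀ b ∈ H, a * b ∈ P → a ∈ P ∨ b ∈ P)

/-- The prime `s`-spectrum of `H`. -/
def sSpec (H : Submonoid G) : Type _ :=
  {P : Set G // IsPrimeSIdeal G H P}

/-- The Zariski topology on `s`-spec(`H`), generated by the sets `D_s(f) = {P | f ∉ P}`. -/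
instance (H : Submonoid G) : TopologicalSpace (sSpec G H) :=
  TopologicalSpace.generateFrom
    {D : Set (sSpec G H) | ∃ f ∈ H, D = {P | f ∉ P.1}}

/-- A fractional `s`-ideal of `H`: a subset `I ⊆ G` with `0 ∈ I`, `I·H = I`, and
`c·I ⊆ H` for some nonzero `c ∈ H`. -/
def IsFractionalSIdeal (H : Submonoid G) (I : Set G) : Prop :=
  (0 : G) ∈ I ∧ Set.image2 (· * ·) I (H : Set G) = I ∧
    ∃ c ∈ H, c ≠ 0 ∧ (fun x => c * x) '' I ⊆ (H : Set G)

/-- `I` is `s`-finitely generated: `I = E·H ∪ {0}` for some finite `E ⊆ G`. -/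
def IsSFinitelyGenerated (H : Submonoid G) (I : Set G) : Prop :=
  ∃ E : Set G, E.Finite ∧ I = Set.image2 (· * ·) E (H : Set G) ∪ {0}

/-- `I` is `s`-invertible: `I·J = H` for some fractional `s`-ideal `J`. -/
def IsSInvertible (H : Submonoid G) (I : Set G) : Prop :=
  ∃ J : Set G, IsFractionalSIdeal G H J ∧ Set.image2 (· * ·) I J = (H : Set G)

/-- `H` is an `s`-Prüfer monoid: every `s`-finitely generated fractional `s`-ideal
other than `{0}` is `s`-invertible. -/
def IsSPrufer (H : Submonoid G) : Prop :=
  ∀ I : Set G, IsFractionalSIdeal G H I → IsSFinitelyGenerated G H I → I ≠ {0} →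
    IsSInvertible G H I

section

variable {G} {H : Submonoid G}

theorem IsQuotientGroupoid.zero_mem (hq : IsQuotientGroupoid G H) : (0 : G) ∈ H := by
  obtain ⟨a, ha, b, -, hb0, hab⟩ := hq 0
  rw [eq_comm, mul_eq_zero, inv_eq_zero, or_iff_left hb0] at hab
  exact hab ▸ ha

theorem notMem_mIdeal_iff {S : Submonoid G} {x : G} (hx : x ∈ S) :
    x ∉ mIdeal G S ↔ x ≠ 0 ∧ x⁻¹ ∈ S := by
  simp only [mIdeal, mem_ofPred_eq, hx, true_and, not_not]
  constructor
  · rintro ⟨y, hy, hxy⟩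
    exact ⟨left_ne_zero_of_mul_eq_one hxy, inv_eq_of_mul_eq_one_right hxy ▸ hy⟩
  · rintro ⟨hx0, hxS⟩
    exact ⟨x⁻¹, hxS, mul_inv_cancel₀ hx0⟩

theorem notMem_mIdeal_inter_iff {S : Submonoid G} (hHS : H ≤ S) {x : G} (hx : x ∈ H) :
    x ∉ mIdeal G S ∩ H ↔ x ≠ 0 ∧ x⁻¹ ∈ S := by
  rw [mem_inter_iff, and_iff_left (SetLike.mem_coe.2 hx)]
  exact notMem_mIdeal_iff (hHS hx)

theorem isPrimeSIdeal_mIdeal_inter (h0 : (0 : G) ∈ H) {S : Submonoid G} (hHS : H ≤ S) :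
    IsPrimeSIdeal G H (mIdeal G S ∩ H) := by
  have hnot : ∀ {x}, x ∈ H → (x ∉ mIdeal G S ∩ H ↔ x ≠ 0 ∧ x⁻¹ ∈ S) :=
    notMem_mIdeal_inter_iff hHS
  refine ⟨inter_subset_right, fun hP => ?_, ?_, ?_, ?_⟩
  · have h1 : (1 : G) ∈ mIdeal G S ∩ H := by rw [hP]; exact H.one_mem
    exact (hnot H.one_mem).2 ⟨one_ne_zero, by rw [inv_one]; exact S.one_mem⟩ h1
  · by_contra h
    exact ((hnot h0).1 h).1 rfl
  · intro p hp h hh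
    by_contra hph
    have hpH : p ∈ H := hp.2
    obtain ⟨hph0, hphS⟩ := (hnot (H.mul_mem hpH hh)).1 hph
    refine (hnot hpH).2 ⟨left_ne_zero_of_mul hph0, ?_⟩ hp
    simpa [mul_inv_rev, mul_inv_cancel_left₀ (right_ne_zero_of_mul hph0)] using
      S.mul_mem (hHS hh) hphS
  · intro a ha b hb hab
    by_contra! h
    obtain ⟨ha0, haS⟩ := (hnot ha).1 h.1
    obtain ⟨hb0, hbS⟩ := (hnot hb).1 h.2
    exact (hnot (H.mul_mem ha hb)).2 ⟨mul_ne_zero ha0 hb0, mul_inv a b ▸ S.mul_mem haS hbS⟩ hab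

namespace IsPrimeSIdeal

variable {P : Set G}

theorem one_notMem (hP : IsPrimeSIdeal G H P) : (1 : G) ∉ P := fun h1 =>
  hP.2.1 (Subset.antisymm hP.1 fun h hh => by simpa using hP.2.2.2.1 1 h1 h hh)

theorem notMem_of_inv_mem (hP : IsPrimeSIdeal G H P) {u : G} (hu0 : u ≠ 0) (hu : u⁻¹ ∈ H) :
    u ∉ P := fun huP => hP.one_notMem (mul_inv_cancel₀ hu0 ▸ hP.2.2.2.1 u huP u⁻¹ hu)

theorem ne_zero_of_notMem (hP : IsPrimeSIdeal G H P) {b : G} (hb : b ∉ P) : b ≠ 0 :=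
  fun h => hb (h ▸ hP.2.2.1)

/-- `H_P = {a * b⁻¹ | a, b ∈ H, b ∉ P}`, described as the `x` with `x * d ∈ H` for some
`d ∈ H \ P`. -/
def localization (hP : IsPrimeSIdeal G H P) : Submonoid G where
  carrier := {x | ∃ d ∈ H, x * d ∈ H ∧ d ∉ P}
  one_mem' := ⟨1, H.one_mem, by rw [mul_one]; exact H.one_mem, hP.one_notMem⟩
  mul_mem' := by
    rintro x y ⟨d, hd, hxd, hdP⟩ ⟨e, he, hye, heP⟩
    refine ⟨d * e, H.mul_mem hd he, ?_, fun hde => (hP.2.2.2.2 d hd e he hde).elim hdP heP⟩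
    simpa only [mul_mul_mul_comm] using H.mul_mem hxd hye

theorem mem_localization (hP : IsPrimeSIdeal G H P) {x : G} :
    x ∈ hP.localization ↔ ∃ d ∈ H, x * d ∈ H ∧ d ∉ P := Iff.rfl

theorem le_localization (hP : IsPrimeSIdeal G H P) : H ≤ hP.localization := fun h hh =>
  ⟨1, H.one_mem, by simpa using hh, hP.one_notMem⟩

theorem mIdeal_localization_inter (hP : IsPrimeSIdeal G H P) :
    mIdeal G hP.localization ∩ H = P := by
  ext x
  by_cases hxH : x ∈ H
  swap
  · exact iff_of_false (fun hx => hxH hx.2) fun hx => hxH (hP.1 hx)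
  rw [← not_iff_not, notMem_mIdeal_inter_iff hP.le_localization hxH, mem_localization]
  constructor
  · rintro ⟨hx0, d, hd, hxd, hdP⟩ hxP
    exact hdP (by simpa [mul_inv_cancel_left₀ hx0] using hP.2.2.2.1 x hxP _ hxd)
  · intro hxP
    have hx0 := hP.ne_zero_of_notMem hxP
    exact ⟨hx0, x, hxH, by rw [inv_mul_cancel₀ hx0]; exact H.one_mem, hxP⟩

end IsPrimeSIdeal

theorem isFractionalSIdeal_image2_union (h0 : (0 : G) ∈ H) {E : Set G} (hE : E ⊆ H) :
    IsFractionalSIdeal G H (image2 (· * ·) E H ∪ {0}) := by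
  refine ⟨Or.inr rfl, ?_, 1, H.one_mem, one_ne_zero, ?_⟩
  · refine Subset.antisymm ?_ fun x hx => ⟨x, hx, 1, H.one_mem, mul_one x⟩
    rintro _ ⟨_, ⟨e, he, h', hh', rfl⟩ | rfl, h, hh, rfl⟩
    · exact Or.inl ⟨e, he, h' * h, H.mul_mem hh' hh, (mul_assoc e h' h).symm⟩
    · exact Or.inr (zero_mul h)
  · rintro _ ⟨_, ⟨e, he, h, hh, rfl⟩ | rfl, rfl⟩
    · simpa using H.mul_mem (hE he) hh
    · simpa using h0

/-- `j` is the factor in `1 = (e * h) * j ∈ (E·H ∪ {0}) · J = H`, where `J` inverts `E·H ∪ {0}`. -/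
theorem IsSPrufer.exists_mul_mem_and_inv_mem (h0 : (0 : G) ∈ H) (hpruf : IsSPrufer G H)
    {E : Set G} (hE : E ⊆ H) (hEfin : E.Finite) {a : G} (ha : a ∈ E) (ha0 : a ≠ 0) :
    ∃ j : G, j ≠ 0 ∧ (∀ e ∈ E, j * e ∈ H) ∧ ∃ e ∈ E, (j * e)⁻¹ ∈ H := by
  set I := image2 (· * ·) E H ∪ {0}
  have hmem : ∀ e ∈ E, e ∈ I := fun e he => Or.inl ⟨e, he, 1, H.one_mem, mul_one e⟩
  have hI0 : I ≠ {0} := fun h => ha0 (by simpa [h] using hmem a ha)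
  obtain ⟨J, -, hIJ⟩ :=
    hpruf I (isFractionalSIdeal_image2_union h0 hE) ⟨E, hEfin, rfl⟩ hI0
  obtain ⟨i, hi, j, hj, hij⟩ : (1 : G) ∈ image2 (· * ·) I J := hIJ ▸ H.one_mem
  refine ⟨j, right_ne_zero_of_mul_eq_one hij,
    fun e he => by
      rw [mul_comm, ← SetLike.mem_coe, ← hIJ]
      exact mem_image2_of_mem (hmem e he) hj, ?_⟩
  rcases hi with ⟨e, he, h, hh, rfl⟩ | rfl
  · refine ⟨e, he, ?_⟩
    rwa [inv_eq_of_mul_eq_one_right (a := j * e) (b := h) (by rw [← hij]; ac_rfl)]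
  · simp at hij

theorem IsSPrufer.exists_mul_mem_and_inv_mem_or (hq : IsQuotientGroupoid G H)
    (hpruf : IsSPrufer G H) {x : G} (hx : x ≠ 0) :
    ∃ b ∈ H, b ≠ 0 ∧ x * b ∈ H ∧ (b⁻¹ ∈ H ∨ (x * b)⁻¹ ∈ H) := by
  obtain ⟨a, ha, b, hb, hb0, rfl⟩ := hq x
  have ha0 : a ≠ 0 := left_ne_zero_of_mul hx
  obtain ⟨j, hj0, hjE, e, he, hje⟩ := hpruf.exists_mul_mem_and_inv_mem hq.zero_mem
    (pair_subset ha hb) (toFinite {a, b}) (mem_insert a {b}) ha0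
  have hnum : a * b⁻¹ * (j * b) = j * a := by field_simp
  refine ⟨j * b, hjE b (by simp), mul_ne_zero hj0 hb0, hnum ▸ hjE a (by simp), ?_⟩
  rcases he with rfl | rfl
  exacts [Or.inr (hnum ▸ hje), Or.inl hje]

theorem IsSPrufer.localization_mIdeal_inter (hq : IsQuotientGroupoid G H)
    (hpruf : IsSPrufer G H) {S : Submonoid G} (hHS : H ≤ S) :
    (isPrimeSIdeal_mIdeal_inter hq.zero_mem hHS).localization = S := by
  refine SetLike.ext fun x => ?_
  rw [IsPrimeSIdeal.mem_localization]
  constructor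
  · rintro ⟨d, hd, hxd, hdP⟩
    obtain ⟨hd0, hdS⟩ := (notMem_mIdeal_inter_iff hHS hd).1 hdP
    simpa [mul_inv_cancel_right₀ hd0] using S.mul_mem (hHS hxd) hdS
  · intro hxS
    by_cases hx0 : x = 0
    · exact ⟨1, H.one_mem, by simpa [hx0] using hq.zero_mem,
        (isPrimeSIdeal_mIdeal_inter hq.zero_mem hHS).one_notMem⟩
    obtain ⟨b, hb, hb0, hxb, hunit⟩ := hpruf.exists_mul_mem_and_inv_mem_or hq hx0
    have hbS : b⁻¹ ∈ S := by
      rcases hunit with h | h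
      · exact hHS h
      · rw [← mul_inv_cancel_left₀ hx0 b⁻¹, ← mul_inv]
        exact S.mul_mem hxS (hHS h)
    exact ⟨b, hb, hxb, (notMem_mIdeal_inter_iff hHS hb).2 ⟨hb0, hbS⟩⟩

theorem IsPrimeSIdeal.isValSubmonoid_localization (hq : IsQuotientGroupoid G H)
    (hpruf : IsSPrufer G H) {P : Set G} (hP : IsPrimeSIdeal G H P) :
    IsValSubmonoid G hP.localization := by
  refine ⟨hP.le_localization hq.zero_mem, fun x hx0 => ?_⟩
  obtain ⟨b, hb, hb0, hxb, h | h⟩ := hpruf.exists_mul_mem_and_inv_mem_or hq hx0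
  · exact Or.inl ⟨b, hb, hxb, hP.notMem_of_inv_mem hb0 h⟩
  · refine Or.inr ⟨x * b, hxb, by simpa [inv_mul_cancel_left₀ hx0] using hb, ?_⟩
    exact hP.notMem_of_inv_mem (mul_ne_zero hx0 hb0) h

def Zar.domination (h0 : (0 : G) ∈ H) (S : Zar G H) : sSpec G H :=
  ⟨mIdeal G S.1 ∩ H, isPrimeSIdeal_mIdeal_inter h0 S.2.2⟩

def sSpec.localization (hq : IsQuotientGroupoid G H) (hpruf : IsSPrufer G H) (P : sSpec G H) :
    Zar G H :=
  ⟨P.2.localization, P.2.isValSubmonoid_localization hq hpruf, P.2.le_localization⟩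

theorem Zar.continuous_domination (h0 : (0 : G) ∈ H) : Continuous (Zar.domination h0) := by
  refine continuous_generateFrom_iff.2 ?_
  rintro _ ⟨f, hf, rfl⟩
  have hpre : Zar.domination h0 ⁻¹' {P | f ∉ P.1} = {_S | f ≠ 0} ∩ {S | f⁻¹ ∈ S.1} := by
    ext S
    exact notMem_mIdeal_inter_iff S.2.2 hf
  rw [hpre]
  exact isOpen_const.inter (TopologicalSpace.isOpen_generateFrom_of_mem ⟨f⁻¹, rfl⟩)

theorem sSpec.continuous_localization (hq : IsQuotientGroupoid G H) (hpruf : IsSPrufer G H) :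
    Continuous (sSpec.localization hq hpruf) := by
  refine continuous_generateFrom_iff.2 ?_
  rintro _ ⟨x, rfl⟩
  have hpre : sSpec.localization hq hpruf ⁻¹' {S | x ∈ S.1} =
      ⋃ d ∈ {d | d ∈ H ∧ x * d ∈ H}, {P | d ∉ P.1} := by
    ext P
    simp [sSpec.localization, IsPrimeSIdeal.mem_localization, and_assoc]
  rw [hpre]
  exact isOpen_biUnion fun d hd => TopologicalSpace.isOpen_generateFrom_of_mem ⟨d, hd.1, rfl⟩

def Zar.dominationHomeomorph (hq : IsQuotientGroupoid G H) (hpruf : IsSPrufer G H) :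
    Zar G H ≃ₜ sSpec G H where
  toFun := Zar.domination hq.zero_mem
  invFun := sSpec.localization hq hpruf
  left_inv S := Subtype.ext (hpruf.localization_mIdeal_inter hq S.2.2)
  right_inv P := Subtype.ext P.2.mIdeal_localization_inter
  continuous_toFun := Zar.continuous_domination hq.zero_mem
  continuous_invFun := sSpec.continuous_localization hq hpruf

end

theorem domination_map_homeomorph_of_sPrufer (H : Submonoid G)
    (hq : IsQuotientGroupoid G H) (hpruf : IsSPrufer G H) :
    ∃ δ : Zar G H ≃ₜ sSpec G H,
      ∀ S : Zar G H, (δ S).1 = mIdeal G S.1 ∩ (H : Set G) :=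
  ⟨Zar.dominationHomeomorph hq hpruf, fun _ => rfl⟩
end

section
/- Let H be a cancellative commutative monoid with zero (1 ≠ 0) and let r be a finitary ideal system on H. Then the set I_r(H) of all r-ideals of H, endowed with the Zariski topology, is a spectral space. -/
open Set Topology

/-- A topological space is spectral if it is quasi-compact, `T0`, sober (every nonempty
irreducible closed subset has a unique generic point), and its quasi-compact open subsets
form a basis of the topology that is closed under finite intersections. -/
def IsSpectralSpace (X : Type*) [TopologicalSpace X] : Prop :=
  CompactSpace X ∧ T0Space X ∧ QuasiSober X ∧
    TopologicalSpace.IsTopologicalBasis {U : Set X | IsOpen U ∧ IsCompact U} ∧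
    ∀ U V : Set X, IsOpen U → IsCompact U → IsOpen V → IsCompact V → IsCompact (U ∩ V)

/-- An ideal system on a cancellative commutative monoid with zero `H`. -/
structure IdealSystem (H : Type*) [CommMonoidWithZero H] [IsCancelMulZero H] where
  toFun : Set H → Set H
  id1 : ∀ X : Set H, X ∪ {0} ⊆ toFun X
  id2 : ∀ X Y : Set H, X ⊆ toFun Y → toFun X ⊆ toFun Y
  id3 : ∀ (c : H) (X : Set H), (fun x => c * x) '' toFun X = toFun ((fun x => c * x) '' X)
  id4 : ∀ c y : H, c * y ∈ toFun {c}

/-- An ideal system is finitary if `X_r` is the union of `E_r` over finite subsets `E ⊆ X`. -/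
def IdealSystem.Finitary {H : Type*} [CommMonoidWithZero H] [IsCancelMulZero H] (r : IdealSystem H) : Prop :=
  ∀ X : Set H, r.toFun X = ⋃ E ∈ {E : Set H | E ⊆ X ∧ E.Finite}, r.toFun E

/-- The set `I_r(H)` of all `r`-ideals of `H`. -/
def RIdeals {H : Type*} [CommMonoidWithZero H] [IsCancelMulZero H] (r : IdealSystem H) : Type _ :=
  {I : Set H // ∃ X : Set H, I = r.toFun X}

/-- The Zariski topology on `I_r(H)`, generated by the sets `U_r(x) = {I | x ∉ I}`. -/
instance {H : Type*} [CommMonoidWithZero H] [IsCancelMulZero H] (r : IdealSystem H) :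
    TopologicalSpace (RIdeals r) :=
  TopologicalSpace.generateFrom
    {U : Set (RIdeals r) | ∃ x : H, U = {I | x ∉ I.1}}

/-! Specialization in the Zariski topology is inclusion of `r`-ideals, so the generic point of
a closed irreducible set `C` can only be the `r`-ideal `⋂ C`. It lies in `C`: otherwise some basic
open neighbourhood `⋂ x ∈ E, U_r(x)` of it, `E` finite, misses `C`, and `C` is covered by the
finitely many closed sets `{I | x ∈ I}`, `x ∈ E`, hence lies in one of them, which puts `x` into
`⋂ C`.

Finitarity is needed only for the compactness of the basic open sets, via Alexander's subbasis
theorem: if `⋂ x ∈ E, U_r(x)` is covered by the `U_r(s)`, `s ∈ S`, then the `r`-ideal `S_r` is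
not in it, so `S_r` contains some `e ∈ E`; then `e ∈ F_r` for a finite `F ⊆ S`, and the
`U_r(s)`, `s ∈ F`, already form a cover. -/

open TopologicalSpace

lemma IdealSystem.subset_toFun {H : Type*} [CommMonoidWithZero H] [IsCancelMulZero H]
    (r : IdealSystem H) (X : Set H) : X ⊆ r.toFun X :=
  subset_union_left.trans (r.id1 X)

lemma IdealSystem.Finitary.exists_finite_of_mem_toFun {H : Type*} [CommMonoidWithZero H]
    [IsCancelMulZero H] {r : IdealSystem H} (hr : r.Finitary) {X : Set H} {x : H}
    (hx : x ∈ r.toFun X) : ∃ F : Finset H, ↑F ⊆ X ∧ x ∈ r.toFun F := by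
  rw [hr X] at hx
  obtain ⟨E, ⟨hEX, hE⟩, hxE⟩ := mem_iUnion₂.mp hx
  exact ⟨hE.toFinset, by simpa using hEX, by simpa using hxE⟩

namespace RIdeals

variable {H : Type*} [CommMonoidWithZero H] [IsCancelMulZero H] {r : IdealSystem H}

lemma toFun_subset (I : RIdeals r) {X : Set H} (hX : X ⊆ I.1) : r.toFun X ⊆ I.1 := by
  obtain ⟨Y, hY⟩ := I.2
  rw [hY] at hX ⊢
  exact r.id2 X Y hX

def sInter (C : Set (RIdeals r)) : RIdeals r :=
  ⟨⋂ I ∈ C, I.1, _, (r.subset_toFun _).antisymm <|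
    subset_iInter₂ fun I hI => I.toFun_subset (biInter_subset_of_mem hI)⟩

lemma isOpen_setOf_notMem (x : H) : IsOpen {I : RIdeals r | x ∉ I.1} :=
  isOpen_generateFrom_of_mem ⟨x, rfl⟩

variable (r) in
def basicOpen (E : Finset H) : Set (RIdeals r) := {I | ∀ x ∈ E, x ∉ I.1}

lemma basicOpen_eq_biInter (E : Finset H) :
    basicOpen r E = ⋂ x ∈ E, {I : RIdeals r | x ∉ I.1} := by
  ext I
  simp [basicOpen]

lemma isOpen_basicOpen (E : Finset H) : IsOpen (basicOpen r E) := by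
  rw [basicOpen_eq_biInter]
  exact isOpen_biInter_finset fun x _ => isOpen_setOf_notMem x

lemma basicOpen_union [DecidableEq H] (E F : Finset H) :
    basicOpen r (E ∪ F) = basicOpen r E ∩ basicOpen r F := by
  ext I
  simp only [basicOpen, Finset.mem_union, mem_ofPred_eq, mem_inter_iff]
  grind

lemma isTopologicalBasis_basicOpen : IsTopologicalBasis (range (basicOpen r)) := by
  classical
  refine ⟨?_, ?_, le_antisymm (le_generateFrom ?_) ?_⟩
  · rintro _ ⟨E, rfl⟩ _ ⟨F, rfl⟩ I hI
    exact ⟨basicOpen r (E ∪ F), ⟨E ∪ F, rfl⟩, basicOpen_union E F ▸ hI,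
      (basicOpen_union E F).subset⟩
  · exact sUnion_eq_univ_iff.mpr fun I => ⟨basicOpen r ∅, ⟨∅, rfl⟩, by simp [basicOpen]⟩
  · rintro _ ⟨E, rfl⟩
    exact isOpen_basicOpen E
  · refine generateFrom_anti (α := RIdeals r) ?_
    rintro _ ⟨x, rfl⟩
    exact ⟨{x}, by simp [basicOpen]⟩

lemma isCompact_basicOpen (hr : r.Finitary) (E : Finset H) : IsCompact (basicOpen r E) := by
  refine isCompact_generateFrom rfl fun P hPS hcover => ?_
  set S : Set H := {s | {I : RIdeals r | s ∉ I.1} ∈ P}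
  obtain ⟨e, heE, heS⟩ : ∃ e ∈ E, e ∈ r.toFun S := by
    by_contra! hS
    obtain ⟨U, hUP, hSU⟩ := hcover (show ⟨r.toFun S, S, rfl⟩ ∈ basicOpen r E from hS)
    obtain ⟨s, rfl⟩ := hPS hUP
    exact hSU (r.subset_toFun S hUP)
  obtain ⟨F, hFS, heF⟩ := hr.exists_finite_of_mem_toFun heS
  refine ⟨(fun s => {I : RIdeals r | s ∉ I.1}) '' F, image_subset_iff.mpr hFS,
    F.finite_toSet.image _, fun I hI => ?_⟩
  by_contra hIF
  have hFI : ↑F ⊆ I.1 := fun s hs => by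
    by_contra hsI
    exact hIF ⟨_, mem_image_of_mem _ hs, hsI⟩
  exact hI e heE (I.toFun_subset hFI heF)

lemma specializes_iff_subset {I J : RIdeals r} : I ⤳ J ↔ I.1 ⊆ J.1 := by
  refine ⟨fun h x hxI => ?_, fun hIJ => specializes_iff_forall_open.mpr fun U hU hJU => ?_⟩
  · by_contra hxJ
    exact h.mem_open (isOpen_setOf_notMem x) hxJ hxI
  · obtain ⟨_, ⟨E, rfl⟩, hJE, hEU⟩ := isTopologicalBasis_basicOpen.isOpen_iff.mp hU J hJU
    exact hEU fun x hx hxI => hJE x hx (hIJ hxI)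

instance : T0Space (RIdeals r) :=
  (t0Space_iff_inseparable _).mpr fun _ _ h => Subtype.ext <|
    (specializes_iff_subset.mp h.specializes).antisymm (specializes_iff_subset.mp h.specializes')

lemma sInter_mem_of_isIrreducible {C : Set (RIdeals r)} (hC : IsIrreducible C)
    (hCc : IsClosed C) : sInter C ∈ C := by
  by_contra hC₀
  obtain ⟨_, ⟨E, rfl⟩, hE₀, hEC⟩ :=
    isTopologicalBasis_basicOpen.isOpen_iff.mp hCc.isOpen_compl _ hC₀
  have hmeet : ∀ x ∈ E, (C ∩ {I : RIdeals r | x ∉ I.1}).Nonempty := fun x hx => by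
    by_contra! hdisj
    refine hE₀ x hx (mem_iInter₂.mpr fun J hJ => ?_)
    by_contra hxJ
    exact hdisj.subset ⟨hJ, hxJ⟩
  obtain ⟨I, hIC, hIE⟩ :=
    isIrreducible_iff_sInter.mp hC (E.image fun x => {I : RIdeals r | x ∉ I.1})
      (by simpa using fun x _ => isOpen_setOf_notMem x) (by simpa using hmeet)
  exact hEC (by simpa [basicOpen_eq_biInter] using hIE) hIC

instance : QuasiSober (RIdeals r) where
  sober {C} hC hCc := ⟨sInter C, isGenericPoint_iff_specializes.mpr fun J => by
    rw [specializes_iff_subset]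
    exact ⟨fun h => (specializes_iff_subset.mpr h).mem_closed hCc
      (sInter_mem_of_isIrreducible hC hCc), fun hJ => biInter_subset_of_mem hJ⟩⟩

theorem spectralSpace (hr : r.Finitary) : SpectralSpace (RIdeals r) where
  toCompactSpace := ⟨by simpa [basicOpen] using isCompact_basicOpen hr ∅⟩
  toQuasiSeparatedSpace := .of_isTopologicalBasis isTopologicalBasis_basicOpen fun E F => by
    classical
    rw [← basicOpen_union]
    exact isCompact_basicOpen hr _
  toPrespectralSpace :=
    .of_isTopologicalBasis' isTopologicalBasis_basicOpen (isCompact_basicOpen hr)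

end RIdeals

theorem SpectralSpace.isSpectralSpace (X : Type*) [TopologicalSpace X] [SpectralSpace X] :
    IsSpectralSpace X :=
  ⟨inferInstance, inferInstance, inferInstance, PrespectralSpace.isTopologicalBasis,
    QuasiSeparatedSpace.inter_isCompact⟩

theorem rIdeals_is_spectral_general {H : Type*} [CommMonoidWithZero H] [IsCancelMulZero H]
    (r : IdealSystem H) (hr : r.Finitary) :
    IsSpectralSpace (RIdeals r) :=
  have := RIdeals.spectralSpace hr
  SpectralSpace.isSpectralSpace _

theorem rIdeals_is_spectral {H : Type*} [CommMonoidWithZero H] [IsCancelMulZero H] [Nontrivial H]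
    (r : IdealSystem H) (hr : r.Finitary) :
    IsSpectralSpace (RIdeals r) :=
  rIdeals_is_spectral_general r hr
end

section
/- Let H be a cancellative commutative monoid with zero (1 ≠ 0) with quotient groupoid G. For every A ⊆ G and x ∈ G, the set U_{A,x} = {r ∈ 𝒳 : x ∈ A_r} is a quasi-compact subset of 𝒳 with the Zariski topology. -/
/-!
The module systems `r` with `x ∈ A_r` are closed under nonempty pointwise intersections, so if
there are any, they have a least element `s`. Every subbasic open set, hence every open set,
containing `s` contains every `r` with `B_s ⊆ B_r` for all `B`; thus any open cover of `U_{A,x}`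
is refined by the single member containing `s`.
-/

open Set Topology

variable (G : Type*) [CommGroupWithZero G]

/-- A generalized `H`-module system on `G`. -/
structure ModuleSystem (H : Submonoid G) where
  toFun : Set G → Set G
  id1 : ∀ A : Set G, A ∪ {0} ⊆ toFun A
  m2 : ∀ A B : Set G, A ⊆ B → toFun A ⊆ toFun B
  id3 : ∀ (c : G) (A : Set G), (fun x => c * x) '' toFun A = toFun ((fun x => c * x) '' A)
  m4 : ∀ A : Set G, Set.image2 (· * ·) (H : Set G) (toFun A) = toFun A

/-- The Zariski topology on the set `𝒳` of all generalized `H`-module systems on `G`,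
generated by the sets `U_{A,x} = {r | x ∈ A_r}`. -/
instance (H : Submonoid G) : TopologicalSpace (ModuleSystem G H) :=
  TopologicalSpace.generateFrom
    {U : Set (ModuleSystem G H) | ∃ (A : Set G) (x : G), U = {r | x ∈ r.toFun A}}

theorem IsCompact.of_forall_specializes {X : Type*} [TopologicalSpace X] {K : Set X} {y : X}
    (hy : y ∈ K) (h : ∀ x ∈ K, x ⤳ y) : IsCompact K := fun _ _ hfK =>
  ⟨y, hy, ClusterPt.of_le_nhds (hfK.trans fun _ hU x hx => mem_of_mem_nhds (h x hx hU))⟩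

lemma Set.image_mul_left_iInter_of_zero_mem {M : Type*} [GroupWithZero M] {ι : Sort*}
    [Nonempty ι] (c : M) {s : ι → Set M} (hs : ∀ i, (0 : M) ∈ s i) :
    (fun x => c * x) '' ⋂ i, s i = ⋂ i, (fun x => c * x) '' s i := by
  rcases eq_or_ne c 0 with rfl | hc
  · have hzero : ∀ t : Set M, (0 : M) ∈ t → (fun x => 0 * x) '' t = {0} := fun t ht => by
      simpa only [zero_mul] using (Set.nonempty_of_mem ht).image_const 0
    rw [hzero _ (mem_iInter.2 hs), iInter_congr fun i => hzero _ (hs i), iInter_const]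
  · exact image_iInter (mulLeft_bijective₀ c hc) s

namespace ModuleSystem

variable {G} {H : Submonoid G}

lemma zero_mem (r : ModuleSystem G H) (A : Set G) : (0 : G) ∈ r.toFun A :=
  r.id1 A (Or.inr rfl)

def iInf {ι : Sort*} [Nonempty ι] (r : ι → ModuleSystem G H) : ModuleSystem G H where
  toFun A := ⋂ i, (r i).toFun A
  id1 A := subset_iInter fun i => (r i).id1 A
  m2 A B hAB := iInter_mono fun i => (r i).m2 A B hAB
  id3 c A := by
    rw [image_mul_left_iInter_of_zero_mem c fun i => (r i).zero_mem A]
    exact iInter_congr fun i => (r i).id3 c A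
  m4 A := by
    refine Subset.antisymm ?_ fun y hy => ⟨1, H.one_mem, y, hy, one_mul y⟩
    rintro _ ⟨a, ha, y, hy, rfl⟩
    exact mem_iInter.2 fun i => (r i).m4 A ▸ mem_image2_of_mem ha (mem_iInter.1 hy i)

lemma specializes_of_forall_subset {r s : ModuleSystem G H}
    (h : ∀ A, s.toFun A ⊆ r.toFun A) : r ⤳ s := by
  simp_rw [Specializes, TopologicalSpace.nhds_generateFrom, le_iInf₂_iff]
  rintro _ ⟨hs, A, x, rfl⟩
  exact iInf₂_le _ ⟨h A hs, A, x, rfl⟩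

end ModuleSystem

theorem subbasic_open_is_compact (H : Submonoid G) (A : Set G) (x : G) :
    IsCompact {r : ModuleSystem G H | x ∈ r.toFun A} := by
  set K := {r : ModuleSystem G H | x ∈ r.toFun A}
  rcases K.eq_empty_or_nonempty with hK | hK
  · exact hK ▸ isCompact_empty
  have : Nonempty K := hK.to_subtype
  let s := ModuleSystem.iInf fun r : K => r.1
  have hsK : s ∈ K := mem_iInter.2 fun r => r.2
  refine IsCompact.of_forall_specializes hsK fun r hr => ?_
  exact ModuleSystem.specializes_of_forall_subset fun B => iInter_subset_of_subset ⟨r, hr⟩ le_rfl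
end
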